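/- Let h : ℂ^N → ℝ be convex, let W ∈ ℂ^{N×N} be Hermitian positive definite, let g, x ∈ ℂ^N, and let α₁ ≥ α₂ > 0. For any x̄₁ ∈ ℂ^N, set x̄₂ = (α₂/α₁)·x̄₁ + ((α₁ − α₂)/α₁)·x. Then −(2/α₁)·S_h(x̄₁, x, g, W, α₁) ≤ −(2/α₂)·S_h(x̄₂, x, g, W, α₂). -/

import Mathlib

open scoped ComplexOrder

noncomputable section

/-- `ℂ^N` with the standard complex inner product (conjugate-linear in the
first argument) and the induced norm. -/
abbrev EC (N : ℕ) := EuclideanSpace ℂ (Fin N)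

/-- Weighted squared norm `‖z‖_W² = zᴴ W z` (its real part, which is the full
value when `W` is Hermitian). -/
def wnorm2 {N : ℕ} (W : Matrix (Fin N) (Fin N) ℂ) (z : EC N) : ℝ :=
  (dotProduct (fun i => starRingEnd ℂ (z i)) (W.mulVec (fun i => z i))).re

/-- Surrogate `S_h(x̄, x, g, W, α) = Re⟨g, x̄ − x⟩ + (1/(2α))‖x̄ − x‖_W² + h(x̄) − h(x)`. -/
def Sh {N : ℕ} (h : EC N → ℝ) (W : Matrix (Fin N) (Fin N) ℂ) (α : ℝ)
    (g x xb : EC N) : ℝ :=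
  (inner ℂ g (xb - x) : ℂ).re + (1 / (2 * α)) * wnorm2 W (xb - x) + h xb - h x

/-- `D_h^C(x, g, W, α) = −(2/α)·inf_{x̄ ∈ C} S_h(x̄, x, g, W, α)`. -/
def Dh {N : ℕ} (h : EC N → ℝ) (C : Set (EC N)) (W : Matrix (Fin N) (Fin N) ℂ)
    (α : ℝ) (g x : EC N) : ℝ :=
  -(2 / α) * sInf ((fun xb => Sh h W α g x xb) '' C)

/-- The real-linear continuous functional `d ↦ Re⟨g, d⟩`, used to say that a
real-differentiable `f : ℂ^N → ℝ` has gradient `g` at a point. -/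
def gradDual {N : ℕ} (g : EC N) : EC N →L[ℝ] ℝ :=
  Complex.reCLM.comp ((innerSL ℂ g).restrictScalars ℝ)

/-- The rank-one matrix `u·uᴴ` with entries `uᵢ · conj(uⱼ)`. -/
def rankOne {N : ℕ} (u : EC N) : Matrix (Fin N) (Fin N) ℂ :=
  Matrix.vecMulVec (fun i => u i) (fun i => starRingEnd ℂ (u i))

end

/-! The point `x̄₂` is the image of `x̄₁` under the homothety of ratio `t = α₂/α₁` centred at
`x`. Under it the linear term of the surrogate scales by `t`, the quadratic term by `t²`, which
the step size `α₂ = t·α₁` turns back into `t`, and convexity bounds the increment of `h` by `t`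
times the original one. Hence `S_h(x̄₂, α₂) ≤ t·S_h(x̄₁, α₁)`, and multiplying by `−2/α₂` gives
the claim. -/

theorem wnorm2_smul {N : ℕ} (W : Matrix (Fin N) (Fin N) ℂ) (t : ℝ) (z : EC N) :
    wnorm2 W (t • z) = t ^ 2 * wnorm2 W z := by
  have hz : (fun i => (t • z) i) = (t : ℂ) • fun i => z i := by
    ext i; simp [Complex.real_smul]
  have hsz : (fun i => starRingEnd ℂ ((t • z) i)) = (t : ℂ) • fun i => starRingEnd ℂ (z i) := by
    ext i; simp [Complex.real_smul]
  rw [wnorm2, wnorm2, hz, hsz, Matrix.mulVec_smul, dotProduct_smul, smul_dotProduct, smul_smul,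
    smul_eq_mul, ← Complex.ofReal_mul, Complex.re_ofReal_mul, sq]

theorem re_inner_smul_right {N : ℕ} (g d : EC N) (t : ℝ) :
    (inner ℂ g (t • d) : ℂ).re = t * (inner ℂ g d : ℂ).re := by
  simp [inner_smul_right_eq_smul]

theorem Sh_homothety_le {N : ℕ} {h : EC N → ℝ} (hconv : ConvexOn ℝ Set.univ h)
    (W : Matrix (Fin N) (Fin N) ℂ) (g x xb : EC N) {α t : ℝ} (ht₀ : 0 ≤ t) (ht₁ : t ≤ 1) :
    Sh h W (t * α) g x (t • xb + (1 - t) • x) ≤ t * Sh h W α g x xb := by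
  have hdiff : t • xb + (1 - t) • x - x = t • (xb - x) := by module
  have hconvex : h (t • xb + (1 - t) • x) ≤ t * h xb + (1 - t) * h x :=
    hconv.2 trivial trivial ht₀ (sub_nonneg.2 ht₁) (by ring)
  have hweight : 1 / (2 * (t * α)) * t ^ 2 = t * (1 / (2 * α)) := by
    rcases eq_or_ne t 0 with rfl | ht
    · simp
    · field_simp
  simp only [Sh, hdiff, re_inner_smul_right, wnorm2_smul]
  linear_combination hconvex + wnorm2 W (xb - x) * hweight

theorem stmt4_general {N : ℕ} (h : EC N → ℝ) (hconv : ConvexOn ℝ Set.univ h)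
    (W : Matrix (Fin N) (Fin N) ℂ)
    (g x : EC N)
    (α₁ α₂ : ℝ) (hα₂ : 0 < α₂) (hα : α₂ ≤ α₁)
    (xb₁ xb₂ : EC N)
    (hxb₂ : xb₂ = (α₂ / α₁) • xb₁ + ((α₁ - α₂) / α₁) • x) :
    -(2 / α₁) * Sh h W α₁ g x xb₁ ≤ -(2 / α₂) * Sh h W α₂ g x xb₂ := by
  have hα₁ : 0 < α₁ := hα₂.trans_le hα
  have hscale : α₂ / α₁ * α₁ = α₂ := div_mul_cancel₀ α₂ hα₁.ne'
  have hsurrogate := Sh_homothety_le hconv W g x xb₁ (α := α₁) (div_pos hα₂ hα₁).le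
    ((div_le_one hα₁).2 hα)
  rw [hscale, one_sub_div hα₁.ne', ← hxb₂] at hsurrogate
  calc -(2 / α₁) * Sh h W α₁ g x xb₁ = -(2 / α₂) * (α₂ / α₁ * Sh h W α₁ g x xb₁) := by
        field_simp
    _ ≤ -(2 / α₂) * Sh h W α₂ g x xb₂ :=
        mul_le_mul_of_nonpos_left hsurrogate (neg_nonpos.2 (by positivity))

/-- Scaled-surrogate comparison. For `h` convex, `W`
Hermitian positive definite, `α₁ ≥ α₂ > 0`, any `x̄₁`, and
`x̄₂ = (α₂/α₁)·x̄₁ + ((α₁ − α₂)/α₁)·x`, one has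
`−(2/α₁)·S_h(x̄₁, x, g, W, α₁) ≤ −(2/α₂)·S_h(x̄₂, x, g, W, α₂)`. -/
theorem stmt4 {N : ℕ} (h : EC N → ℝ) (hconv : ConvexOn ℝ Set.univ h)
    (W : Matrix (Fin N) (Fin N) ℂ) (hW : W.PosDef)
    (g x : EC N)
    (α₁ α₂ : ℝ) (hα₂ : 0 < α₂) (hα : α₂ ≤ α₁)
    (xb₁ xb₂ : EC N)
    (hxb₂ : xb₂ = (α₂ / α₁) • xb₁ + ((α₁ - α₂) / α₁) • x) :
    -(2 / α₁) * Sh h W α₁ g x xb₁ ≤ -(2 / α₂) * Sh h W α₂ g x xb₂ :=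
  stmt4_general h hconv W g x α₁ α₂ hα₂ hα xb₁ xb₂ hxb₂
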